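/- Normalization of the left q-rational vector (matrix formula): let a = (a₁, …, a₂ₙ) be a positive even continued form (a₁ ≥ 0 and aᵢ ≥ 1 for 2 ≤ i ≤ 2n). Working over the Laurent polynomial ring ℤ[q, q⁻¹], let (ℛ♭, 𝒮♭) := q^{a₂ + a₄ + ⋯ + a₂ₙ₋₂ + a₂ₙ} · β(a, q) · (1, 1−q)ᵀ. Then both ℛ♭ and 𝒮♭ are honest polynomials in q (they contain no negative powers of q), and the constant coefficient of 𝒮♭ equals 1. -/
import Mathlib


open Matrix LaurentPolynomial

/-- The q-deformed generator σ₁(q) = [[q⁻¹, −q⁻¹], [0, 1]] over ℤ[q, q⁻¹]. -/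
noncomputable def sig1L : Matrix (Fin 2) (Fin 2) (LaurentPolynomial ℤ) :=
  !![T (-1), -T (-1); 0, 1]

/-- The q-deformed generator σ₂(q) = [[1, 0], [1, q⁻¹]] over ℤ[q, q⁻¹]. -/
noncomputable def sig2L : Matrix (Fin 2) (Fin 2) (LaurentPolynomial ℤ) :=
  !![1, 0; 1, T (-1)]

/-- `betaL a k` is the product of the first `k` alternating factors
`σ₁(q)^{-a 1} · σ₂(q)^{a 2} · σ₁(q)^{-a 3} ⋯` over ℤ[q, q⁻¹] (indices start at 1). -/
noncomputable def betaL (a : ℕ → ℤ) : ℕ → Matrix (Fin 2) (Fin 2) (LaurentPolynomial ℤ)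
  | 0 => 1
  | k + 1 => betaL a k *
      (if (k + 1) % 2 = 1 then sig1L ^ (-(a (k + 1))) else sig2L ^ (a (k + 1)))

attribute [-simp] LaurentPolynomial.T_mul

noncomputable def S1i : Matrix (Fin 2) (Fin 2) (LaurentPolynomial ℤ) := !![T 1, 1; 0, 1]

lemma TT (s t : ℤ) : T (R := ℤ) s * T t = T (s + t) := (T_add s t).symm

lemma sig1L_mul_S1i : sig1L * S1i = 1 := by
  rw [sig1L, S1i, Matrix.mul_fin_two, Matrix.one_fin_two]
  norm_num [TT]

lemma S1i_pow (m : ℕ) : S1i ^ m = !![T m, ∑ i ∈ Finset.range m, T i; 0, 1] := by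
  induction m with
  | zero => simp [Matrix.one_fin_two]
  | succ m ih =>
    rw [pow_succ, ih, S1i, Matrix.mul_fin_two]
    norm_num [TT, Finset.sum_range_succ, add_comm]

lemma sig2L_pow (m : ℕ) : sig2L ^ m = !![1, 0; ∑ i ∈ Finset.range m, T (-(i:ℤ)), T (-(m:ℤ))] := by
  induction m with
  | zero => simp [Matrix.one_fin_two]
  | succ m ih =>
    rw [pow_succ, ih, sig2L, Matrix.mul_fin_two]
    norm_num [TT, Finset.sum_range_succ, add_comm]

lemma sig1L_zpow_neg (m : ℕ) : sig1L ^ (-(m:ℤ)) = S1i ^ m := by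
  rw [Matrix.zpow_neg_natCast]
  refine inv_eq_right_inv ?_
  have h2 : S1i * sig1L = 1 := mul_eq_one_comm.mp sig1L_mul_S1i
  have hc : Commute sig1L S1i := by
    unfold Commute SemiconjBy; rw [sig1L_mul_S1i, h2]
  rw [← hc.mul_pow, sig1L_mul_S1i, one_pow]

lemma key (a : ℕ → ℤ) : ∀ n : ℕ, (∀ j, j < n → 0 ≤ a (2*j+1)) → (∀ j, j < n → 1 ≤ a (2*j+2)) →
    ∀ X Y : Polynomial ℤ, Y.coeff 0 = 1 →
    ∃ P Q : Polynomial ℤ,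
      Polynomial.toLaurent P = T (∑ i ∈ Finset.range n, a (2*i+2)) *
        (betaL a (2*n) *ᵥ ![Polynomial.toLaurent X, Polynomial.toLaurent Y]) 0 ∧
      Polynomial.toLaurent Q = T (∑ i ∈ Finset.range n, a (2*i+2)) *
        (betaL a (2*n) *ᵥ ![Polynomial.toLaurent X, Polynomial.toLaurent Y]) 1 ∧
      Q.coeff 0 = 1 := by
  intro n
  induction n with
  | zero =>
    intro _ _ X Y hY
    refine ⟨X, Y, ?_, ?_, hY⟩ <;>
      simp [betaL, Matrix.one_mulVec]
  | succ n ih =>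
    intro hodd heven X Y hY
    set m1 := (a (2*n+1)).toNat with hm1def
    set m2 := (a (2*n+2)).toNat with hm2def
    have ha1 : a (2*n+1) = (m1:ℤ) := by
      have := hodd n (Nat.lt_succ_self n); omega
    have ha2 : a (2*n+2) = (m2:ℤ) := by
      have := heven n (Nat.lt_succ_self n); omega
    have hm2 : 1 ≤ m2 := by
      have := heven n (Nat.lt_succ_self n); omega
    have hb : betaL a (2*(n+1)) = betaL a (2*n) * (S1i ^ m1 * sig2L ^ m2) := by
      have e1 : 2*(n+1) = (2*n+1)+1 := by ring
      rw [e1, betaL, betaL]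
      rw [if_pos (by omega : (2*n+1) % 2 = 1), if_neg (by omega : ¬ (2*n+1+1) % 2 = 1)]
      have e2 : 2*n+1+1 = 2*n+2 := by omega
      rw [e2, ha1, ha2, sig1L_zpow_neg, zpow_natCast, mul_assoc]
    set S1 : LaurentPolynomial ℤ := ∑ i ∈ Finset.range m1, T (i:ℤ) with hS1
    set S2 : LaurentPolynomial ℤ := ∑ i ∈ Finset.range m2, T (-(i:ℤ)) with hS2
    set Sq1 : Polynomial ℤ := ∑ i ∈ Finset.range m1, Polynomial.X ^ i with hSq1def
    set Sq2 : Polynomial ℤ := ∑ i ∈ Finset.range m2, Polynomial.X ^ (m2 - i) with hSq2def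
    set Y' : Polynomial ℤ := Sq2 * X + Y with hY'def
    set X' : Polynomial ℤ := Polynomial.X ^ (m1+m2) * X + Sq1 * Y' with hX'def
    have hSq1 : Polynomial.toLaurent Sq1 = S1 := by
      rw [hSq1def, map_sum]
      exact Finset.sum_congr rfl fun i _ => Polynomial.toLaurent_X_pow i
    have hSq2 : Polynomial.toLaurent Sq2 = T (m2:ℤ) * S2 := by
      rw [hSq2def, map_sum, hS2, Finset.mul_sum]
      refine Finset.sum_congr rfl fun i hi => ?_
      rw [Polynomial.toLaurent_X_pow, TT]
      congr 1
      have := Finset.mem_range.mp hi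
      omega
    have hY'c : Y'.coeff 0 = 1 := by
      rw [hY'def, Polynomial.coeff_add, Polynomial.mul_coeff_zero, hY, hSq2def,
        Polynomial.finset_sum_coeff]
      rw [Finset.sum_eq_zero, zero_mul, zero_add]
      intro i hi
      rw [Polynomial.coeff_X_pow, if_neg]
      have := Finset.mem_range.mp hi
      omega
    have hvec : (T (R:=ℤ) (m2:ℤ)) • ((S1i ^ m1 * sig2L ^ m2) *ᵥ
        ![Polynomial.toLaurent X, Polynomial.toLaurent Y]) =
        ![Polynomial.toLaurent X', Polynomial.toLaurent Y'] := by
      have hA : T (R:=ℤ) (m2:ℤ) * T (m1:ℤ) = T ((m1:ℤ) + (m2:ℤ)) := by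
        rw [TT]; congr 1; ring
      have hB : T (R:=ℤ) (m2:ℤ) * T (-(m2:ℤ)) = 1 := by
        rw [TT]; simp
      funext j
      rw [← mulVec_mulVec, S1i_pow, sig2L_pow]
      have hC : Polynomial.toLaurent ((Polynomial.X : Polynomial ℤ) ^ (m1+m2)) = T ((m1:ℤ) + (m2:ℤ)) := by
        rw [Polynomial.toLaurent_X_pow]; norm_num
      fin_cases j
      · simp [Matrix.mulVec, dotProduct, Fin.sum_univ_two, smul_eq_mul,
          hX'def, hY'def, map_add, _root_.map_mul, hC, hSq1, hSq2, ]
        linear_combination Polynomial.toLaurent X * hA +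
          (∑ i ∈ Finset.range m1, T (i:ℤ)) * Polynomial.toLaurent Y * hB
      · simp [Matrix.mulVec, dotProduct, Fin.sum_univ_two, smul_eq_mul,
          hX'def, hY'def, map_add, _root_.map_mul, hC, hSq1, hSq2, ]
        linear_combination Polynomial.toLaurent Y * hB
    have hmain : ∀ j, T (∑ i ∈ Finset.range (n+1), a (2*i+2)) *
        (betaL a (2*(n+1)) *ᵥ ![Polynomial.toLaurent X, Polynomial.toLaurent Y]) j
        = T (∑ i ∈ Finset.range n, a (2*i+2)) *
        (betaL a (2*n) *ᵥ ![Polynomial.toLaurent X', Polynomial.toLaurent Y']) j := by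
      intro j
      rw [← hvec, mulVec_smul, hb, ← mulVec_mulVec, Finset.sum_range_succ, T_add, ha2]
      simp only [Pi.smul_apply, smul_eq_mul]
      ring
    obtain ⟨P, Q, hP, hQ, hQ0⟩ := ih (fun j hj => hodd j (hj.trans (Nat.lt_succ_self n)))
      (fun j hj => heven j (hj.trans (Nat.lt_succ_self n))) X' Y' hY'c
    exact ⟨P, Q, hP.trans (hmain 0).symm, hQ.trans (hmain 1).symm, hQ0⟩

/-- normalization of the left q-rational vector: for a positive even
continued form a, the entries of q^{a₂ + a₄ + ⋯ + a₂ₙ} · β(a, q) · (1, 1−q)ᵀ are honest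
polynomials in q (no negative powers), and the constant coefficient of the second one is 1. -/
theorem flat_vector_normalization (n : ℕ) (hn : 1 ≤ n) (a : ℕ → ℤ)
    (h1 : 0 ≤ a 1) (h2 : ∀ i, 2 ≤ i → i ≤ 2 * n → 1 ≤ a i) :
    ∃ (P Q : Polynomial ℤ),
      Polynomial.toLaurent P =
        T (∑ i ∈ Finset.range n, a (2 * i + 2)) * (betaL a (2 * n) *ᵥ ![1, 1 - T 1]) 0 ∧
      Polynomial.toLaurent Q =
        T (∑ i ∈ Finset.range n, a (2 * i + 2)) * (betaL a (2 * n) *ᵥ ![1, 1 - T 1]) 1 ∧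
      Q.coeff 0 = 1 := by
  have hodd : ∀ j, j < n → 0 ≤ a (2*j+1) := by
    intro j hj
    rcases Nat.eq_zero_or_pos j with h | h
    · subst h; simpa using h1
    · have := h2 (2*j+1) (by omega) (by omega); omega
  have heven : ∀ j, j < n → 1 ≤ a (2*j+2) := fun j hj => h2 _ (by omega) (by omega)
  obtain ⟨P, Q, hP, hQ, hQ0⟩ := key a n hodd heven 1 (1 - Polynomial.X) (by simp)
  have hv : ![Polynomial.toLaurent (1 : Polynomial ℤ), Polynomial.toLaurent (1 - Polynomial.X)]
      = ![1, 1 - T 1] := by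
    funext j; fin_cases j <;> simp [Polynomial.toLaurent_X]
  rw [hv] at hP hQ
  exact ⟨P, Q, hP, hQ, hQ0⟩
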